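/- If Φ is a total truth-table functional and X is Schnorr random with respect to Lebesgue measure, then Φ(X) is Schnorr random with respect to the pushforward measure λ_Φ. -/

import Mathlib

open MeasureTheory Filter

/-- Cantor space `2^ω`. -/
abbrev Cantor : Type := ℕ → Bool

/-- The first `n` bits of a sequence, as a finite binary string. -/
def pref (X : Cantor) (n : ℕ) : List Bool := List.ofFn fun i : Fin n => X i

/-- The basic open (cylinder) set determined by a finite string `σ`. -/
def cyl (σ : List Bool) : Set Cantor := {X | pref X σ.length = σ}

/-- Partial recursiveness relative to an oracle `O : ℕ → ℕ`
(the clauses of `Nat.Partrec` plus an oracle clause). -/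
inductive RecIn (O : ℕ → ℕ) : (ℕ →. ℕ) → Prop
  | zero : RecIn O (pure 0)
  | succ : RecIn O Nat.succ
  | left : RecIn O ↑fun n : ℕ => n.unpair.1
  | right : RecIn O ↑fun n : ℕ => n.unpair.2
  | oracle : RecIn O ↑O
  | pair {f g} : RecIn O f → RecIn O g → RecIn O fun n => Nat.pair <$> f n <*> g n
  | comp {f g} : RecIn O f → RecIn O g → RecIn O fun n => g n >>= f
  | prec {f g} : RecIn O f → RecIn O g → RecIn O (Nat.unpaired fun a n =>
      n.rec (f a) fun y IH => do let i ← IH; g (Nat.pair a (Nat.pair y i)))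
  | rfind {f} : RecIn O f →
      RecIn O fun a => Nat.rfind fun n => (fun m => m = 0) <$> f (Nat.pair a n)

/-- `f` is computable relative to the oracle `A ∈ 2^ω`. -/
def CantorComputableIn (A : Cantor) {α β : Type} [Primcodable α] [Primcodable β]
    (f : α → β) : Prop :=
  RecIn (fun n => (A n).toNat) fun n =>
    Part.bind (Part.ofOption (Encodable.decode (α := α) n)) fun a =>
      Part.some (Encodable.encode (f a))

/-- `X ∈ 2^ω` is a computable sequence. -/
def ComputableSeq (X : Cantor) : Prop := Computable X

/-- A computable real: one with a computable sequence of rational approximations. -/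
def ComputableReal (r : ℝ) : Prop :=
  ∃ q : ℕ → ℚ, Computable q ∧ ∀ n, |r - (q n : ℝ)| ≤ (2 : ℝ)⁻¹ ^ n

/-- A computable probability measure on Cantor space: the measures of cylinders are
uniformly computable reals. -/
def ComputableMeasure (μ : Measure Cantor) : Prop :=
  IsProbabilityMeasure μ ∧
    ∃ q : List Bool → ℕ → ℚ, Computable₂ q ∧
      ∀ σ n, |(μ (cyl σ)).toReal - (q σ n : ℝ)| ≤ (2 : ℝ)⁻¹ ^ n

/-- A uniformly effectively open sequence of classes: each `U i` is the union of a
computable enumeration of cylinders. -/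
def EffOpen (U : ℕ → Set Cantor) : Prop :=
  ∃ f : ℕ → ℕ → Option (List Bool), Computable₂ f ∧
    ∀ i, U i = ⋃ n : ℕ, Option.elim (f i n) ∅ cyl

/-- A uniformly `A`-effectively open sequence of classes. -/
def EffOpenIn (A : Cantor) (U : ℕ → Set Cantor) : Prop :=
  ∃ f : ℕ → ℕ → Option (List Bool), CantorComputableIn A (fun p : ℕ × ℕ => f p.1 p.2) ∧
    ∀ i, U i = ⋃ n : ℕ, Option.elim (f i n) ∅ cyl

/-- A `μ`-Martin-Löf test. -/
def MLTest (μ : Measure Cantor) (U : ℕ → Set Cantor) : Prop :=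
  EffOpen U ∧ ∀ i, μ (U i) ≤ (2 : ENNReal)⁻¹ ^ i

/-- `X` is `μ`-Martin-Löf random. -/
def MLRandom (μ : Measure Cantor) (X : Cantor) : Prop :=
  ∀ U : ℕ → Set Cantor, MLTest μ U → X ∉ ⋂ i, U i

/-- A `μ`-Martin-Löf test relative to the oracle `A`. -/
def MLTestIn (A : Cantor) (μ : Measure Cantor) (U : ℕ → Set Cantor) : Prop :=
  EffOpenIn A U ∧ ∀ i, μ (U i) ≤ (2 : ENNReal)⁻¹ ^ i

/-- `X` is `μ`-Martin-Löf random relative to the oracle `A`. -/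
def MLRandomIn (A : Cantor) (μ : Measure Cantor) (X : Cantor) : Prop :=
  ∀ U : ℕ → Set Cantor, MLTestIn A μ U → X ∉ ⋂ i, U i

/-- A `μ`-Schnorr test: a Martin-Löf test whose levels have measure exactly `2⁻ⁱ`. -/
def SchnorrTest (μ : Measure Cantor) (U : ℕ → Set Cantor) : Prop :=
  EffOpen U ∧ ∀ i, μ (U i) = (2 : ENNReal)⁻¹ ^ i

/-- `X` is `μ`-Schnorr random. -/
def SchnorrRandom (μ : Measure Cantor) (X : Cantor) : Prop :=
  ∀ U : ℕ → Set Cantor, SchnorrTest μ U → X ∉ ⋂ i, U i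

/-- The set of atoms of `μ`. -/
def Atoms (μ : Measure Cantor) : Set Cantor := {X | 0 < μ {X}}

/-- `lam` is the uniform (Lebesgue) measure on Cantor space. -/
def IsLebesgue (lam : Measure Cantor) : Prop :=
  ∀ σ : List Bool, lam (cyl σ) = (2 : ENNReal)⁻¹ ^ σ.length

/-- A total (truth-table) functional: every output bit is a computable function of a
computably bounded finite initial segment of the input. -/
def TTFunctional (Φ : Cantor → Cantor) : Prop :=
  ∃ (u : ℕ → ℕ) (g : List Bool → ℕ → Bool), Computable u ∧ Computable₂ g ∧
    ∀ X n, Φ X n = g (pref X (u n)) n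

/-- `B` is a Δ⁰₂ sequence: it has a uniformly computable approximation converging
pointwise to it. -/
def Delta02 (B : Cantor) : Prop :=
  ∃ Bs : ℕ → Cantor, Computable₂ (fun s n => Bs s n) ∧
    ∀ n, ∃ N, ∀ s, N ≤ s → Bs s n = B n

/-- `theta As X n` is the least stage `s` with `X↾n = As s↾n`, and `⊤ = +∞` if there
is no such stage. -/
noncomputable def theta (As : ℕ → Cantor) (X : Cantor) (n : ℕ) : ℕ∞ :=
  sInf {e : ℕ∞ | ∃ s : ℕ, e = (s : ℕ∞) ∧ pref X n = pref (As s) n}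

open Classical in
/-- The tally functional determined by the approximation `As`: the output is
`1^{θ(X,0)} 0 1^{θ(X,1)} 0 ⋯`, continuing with `1^ω` as soon as some `θ(X,n) = +∞`
(position `k` is a `0` exactly when `k = θ(X,0) + ⋯ + θ(X,m) + m` for some `m`). -/
noncomputable def tally (As : ℕ → Cantor) (X : Cantor) : Cantor := fun k =>
  if ∃ m : ℕ, (k : ℕ∞) = (∑ i ∈ Finset.range (m + 1), theta As X i) + (m : ℕ∞)
    then false else true

/-- The join `A ⊕ B` of two sequences. -/
def join (A B : Cantor) : Cantor := fun k => if k % 2 = 0 then A (k / 2) else B (k / 2)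

/-! A truth-table functional pulls cylinders back computably: `Φ⁻¹[σ]` is the union of the
cylinders `[τ]`, with `|τ|` the largest use of the first `|σ|` output bits, on which the table
of `Φ` produces `σ`, and that condition is decidable in `(σ, τ)`. So for a `λ_Φ`-Schnorr test
`(U_i)` the sets `Φ⁻¹ U_i` are uniformly effectively open, and since `Φ` is continuous,
`λ(Φ⁻¹ U_i) = λ_Φ(U_i) = 2⁻ⁱ`: they form a `λ`-Schnorr test, which contains `X` whenever
`(U_i)` contains `Φ X`. -/

open Set

lemma Option.elim_empty_eq_biUnion {α β : Type*} (o : Option α) (S : α → Set β) :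
    o.elim ∅ S = ⋃ a ∈ o, S a := by
  cases o <;> simp

lemma length_pref (X : Cantor) (n : ℕ) : (pref X n).length = n := List.length_ofFn

lemma pref_succ (X : Cantor) (n : ℕ) : pref X (n + 1) = pref X n ++ [X n] := by
  rw [pref, List.ofFn_succ', List.concat_eq_append]
  rfl

lemma take_pref (X : Cantor) {m n : ℕ} (h : n ≤ m) : (pref X m).take n = pref X n := by
  apply List.ext_getElem (by simp [length_pref, h])
  intro k hk _
  simp [pref]

lemma mem_cyl_pref (X : Cantor) (n : ℕ) : X ∈ cyl (pref X n) := by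
  simp [cyl, length_pref]

lemma continuous_comp_pref {α : Type*} [TopologicalSpace α] (F : List Bool → α) (n : ℕ) :
    Continuous fun X : Cantor => F (pref X n) :=
  (continuous_of_discreteTopology (f := fun ρ : Fin n → Bool => F (List.ofFn ρ))).comp
    (continuous_pi fun i => continuous_apply (i : ℕ))

lemma isOpen_cyl (σ : List Bool) : IsOpen (cyl σ) :=
  isOpen_iff_continuous_mem.2 (continuous_comp_pref (· = σ) σ.length)

lemma EffOpen.isOpen {U : ℕ → Set Cantor} (hU : EffOpen U) (i : ℕ) : IsOpen (U i) := by
  obtain ⟨f, -, hUf⟩ := hU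
  rw [hUf i]
  refine isOpen_iUnion fun n => ?_
  cases f i n
  · exact isOpen_empty
  · exact isOpen_cyl _

lemma TTFunctional.continuous {Φ : Cantor → Cantor} (hΦ : TTFunctional Φ) : Continuous Φ := by
  obtain ⟨u, g, -, -, hΦg⟩ := hΦ
  refine continuous_pi fun n => ?_
  simp_rw [hΦg]
  exact continuous_comp_pref (g · n) (u n)

section TruthTable

variable (u : ℕ → ℕ) (g : List Bool → ℕ → Bool)

def useBound : ℕ → ℕ
  | 0 => 0
  | n + 1 => max (useBound n) (u n)

def ttPrefix (τ : List Bool) : ℕ → List Bool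
  | 0 => []
  | n + 1 => ttPrefix τ n ++ [g (τ.take (u n)) n]

def ttCovers (σ τ : List Bool) : Bool :=
  decide (τ.length = useBound u σ.length ∧ ttPrefix u g τ σ.length = σ)

variable {u g}

lemma le_useBound {k n : ℕ} (h : k < n) : u k ≤ useBound u n := by
  induction n with
  | zero => omega
  | succ n ih =>
    rcases Nat.lt_succ_iff_lt_or_eq.1 h with h | rfl
    · exact (ih h).trans (le_max_left _ _)
    · exact le_max_right _ _

lemma pref_eq_ttPrefix {Φ : Cantor → Cantor} (hΦ : ∀ X n, Φ X n = g (pref X (u n)) n)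
    (X : Cantor) {m n : ℕ} (h : ∀ k < n, u k ≤ m) : pref (Φ X) n = ttPrefix u g (pref X m) n := by
  induction n with
  | zero => rfl
  | succ n ih =>
    rw [pref_succ, ih fun k hk => h k (by omega), ttPrefix, hΦ, take_pref X (h n n.lt_succ_self)]

lemma preimage_cyl_eq_iUnion_ttCovers {Φ : Cantor → Cantor}
    (hΦ : ∀ X n, Φ X n = g (pref X (u n)) n) (σ : List Bool) :
    Φ ⁻¹' cyl σ = ⋃ τ, ⋃ (_ : ttCovers u g σ τ = true), cyl τ := by
  have hpref (X : Cantor) :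
      pref (Φ X) σ.length = ttPrefix u g (pref X (useBound u σ.length)) σ.length :=
    pref_eq_ttPrefix hΦ X fun _ => le_useBound
  ext X
  simp only [mem_preimage, mem_iUnion, ttCovers, decide_eq_true_iff, exists_prop]
  constructor
  · intro hX
    exact ⟨_, ⟨length_pref X _, (hpref X).symm.trans hX⟩, mem_cyl_pref X _⟩
  · rintro ⟨τ, ⟨hlen, hτ⟩, hXτ⟩
    have hXτ' : pref X (useBound u σ.length) = τ := hlen ▸ hXτ
    change pref (Φ X) σ.length = σ
    rw [hpref, hXτ', hτ]

open Computable in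
lemma computable_useBound (hu : Computable u) : Computable (useBound u) :=
  (nat_rec (f := id) (g := fun _ => 0) (h := fun _ (p : ℕ × ℕ) => max p.2 (u p.1)) Computable.id
    (const 0) (Primrec.nat_max.to_comp.comp (snd.comp snd) (hu.comp (fst.comp snd))).to₂).of_eq
    fun n => by induction n <;> simp_all [useBound]

open Computable in
lemma computable_ttPrefix (hu : Computable u) (hg : Computable₂ g) : Computable₂ (ttPrefix u g) :=
  (nat_rec (f := fun p : List Bool × ℕ => p.2) (g := fun _ => ([] : List Bool))
    (h := fun p (q : ℕ × List Bool) => q.2 ++ [g (p.1.take (u q.1)) q.1]) snd (const [])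
    (list_concat.comp (snd.comp snd) (hg.comp (Primrec.list_take.to_comp.comp
      (hu.comp (fst.comp snd)) (fst.comp fst)) (fst.comp snd))).to₂).of_eq
    fun p => by induction p.2 <;> simp_all [ttPrefix]

open Computable in
lemma computable_ttCovers (hu : Computable u) (hg : Computable₂ g) :
    Computable₂ (ttCovers u g) := by
  have hlen : Computable fun p : List Bool × List Bool =>
      decide (p.2.length = useBound u p.1.length) :=
    Primrec.eq.decide.to_comp.comp (list_length.comp snd)
      ((computable_useBound hu).comp (list_length.comp fst))
  have hval : Computable fun p : List Bool × List Bool =>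
      decide (ttPrefix u g p.2 p.1.length = p.1) :=
    Primrec.eq.decide.to_comp.comp ((computable_ttPrefix hu hg).comp snd (list_length.comp fst))
      fst
  exact (Primrec.and.to_comp.comp hlen hval).of_eq fun p => by simp [ttCovers]

end TruthTable

-- The `m`-th entry reads `m` as a pair `(n, code τ)` and keeps `τ` when `p σ τ` holds for the
-- `n`-th enumerated string `σ`.
def coverEnum (f : ℕ → ℕ → Option (List Bool)) (p : List Bool → List Bool → Bool) (i m : ℕ) :
    Option (List Bool) :=
  (f i m.unpair.1).bind fun σ =>
    (Encodable.decode₂ (List Bool) m.unpair.2).bind fun τ => bif p σ τ then some τ else none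

open Computable in
lemma computable_coverEnum {f : ℕ → ℕ → Option (List Bool)} {p : List Bool → List Bool → Bool}
    (hf : Computable₂ f) (hp : Computable₂ p) : Computable₂ (coverEnum f p) :=
  option_bind (hf.comp fst (fst.comp (unpair.comp snd)))
    (option_bind (Primrec.decode₂.to_comp.comp (snd.comp (unpair.comp (snd.comp fst))))
      (Computable.cond (hp.comp (snd.comp fst) snd) (option_some.comp snd) (const none)).to₂).to₂

lemma EffOpen.preimage {Φ : Cantor → Cantor} {p : List Bool → List Bool → Bool}
    (hp : Computable₂ p) (hΦ : ∀ σ, Φ ⁻¹' cyl σ = ⋃ τ, ⋃ (_ : p σ τ = true), cyl τ)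
    {U : ℕ → Set Cantor} (hU : EffOpen U) : EffOpen fun i => Φ ⁻¹' U i := by
  obtain ⟨f, hf, hUf⟩ := hU
  refine ⟨coverEnum f p, computable_coverEnum hf hp, fun i => ?_⟩
  ext X
  simp only [hUf, preimage_iUnion, Option.elim_empty_eq_biUnion, hΦ, mem_iUnion, Option.mem_def,
    exists_prop]
  constructor
  · rintro ⟨n, σ, hσ, τ, hτ, hX⟩
    exact ⟨Nat.pair n (Encodable.encode τ), τ, by simp [coverEnum, hσ, hτ], hX⟩
  · rintro ⟨m, τ, hτ, hX⟩
    simp only [coverEnum, Option.bind_eq_some_iff] at hτ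
    obtain ⟨σ, hσ, τ', -, hpτ⟩ := hτ
    cases h : p σ τ' <;> simp only [h, cond_false, cond_true, reduceCtorEq, Option.some_inj] at hpτ
    exact ⟨_, σ, hσ, τ, hpτ ▸ h, hX⟩

lemma TTFunctional.effOpen_preimage {Φ : Cantor → Cantor} (hΦ : TTFunctional Φ)
    {U : ℕ → Set Cantor} (hU : EffOpen U) : EffOpen fun i => Φ ⁻¹' U i := by
  obtain ⟨u, g, hu, hg, hΦg⟩ := hΦ
  exact hU.preimage (computable_ttCovers hu hg) (preimage_cyl_eq_iUnion_ttCovers hΦg)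

lemma SchnorrTest.preimage {μ : Measure Cantor} {Φ : Cantor → Cantor} (hΦ : TTFunctional Φ)
    {U : ℕ → Set Cantor} (hU : SchnorrTest (μ.map Φ) U) : SchnorrTest μ fun i => Φ ⁻¹' U i := by
  refine ⟨hΦ.effOpen_preimage hU.1, fun i => ?_⟩
  rw [← Measure.map_apply hΦ.continuous.measurable (hU.1.isOpen i).measurableSet]
  exact hU.2 i

lemma SchnorrRandom.map {μ : Measure Cantor} {Φ : Cantor → Cantor} (hΦ : TTFunctional Φ)
    {X : Cantor} (hX : SchnorrRandom μ X) : SchnorrRandom (μ.map Φ) (Φ X) := fun _ hU hΦX =>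
  hX _ (hU.preimage hΦ) (mem_iInter.2 fun i => mem_iInter.1 hΦX i)

theorem stmt7_general (lam : Measure Cantor)
    (Φ : Cantor → Cantor) (hΦ : TTFunctional Φ) (X : Cantor)
    (hX : SchnorrRandom lam X) : SchnorrRandom (Measure.map Φ lam) (Φ X) :=
  hX.map hΦ

/-- Preservation of Schnorr randomness under total (truth-table) functionals. -/
theorem stmt7 (lam : Measure Cantor) (hlam : IsLebesgue lam)
    (Φ : Cantor → Cantor) (hΦ : TTFunctional Φ) (X : Cantor)
    (hX : SchnorrRandom lam X) : SchnorrRandom (Measure.map Φ lam) (Φ X) :=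
  stmt7_general lam Φ hΦ X hX
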